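/- arXiv:1907.05104 — 3 statements merged into one kernel-verified Lean document; each statement's English description precedes it below -/
import Mathlib

section
/- If α ≤ β are finite-meet preserving maps H → N between frames (pointwise order), then Gl(α) ⊆ Gl(β), and the inclusion i : Gl(α) → Gl(β) preserves arbitrary joins and finite meets (a frame homomorphism). -/
section
variable {N H : Type*} [Order.Frame N] [Order.Frame H]

/-- The Artin glueing `Gl(γ) = {(n,h) : n ≤ γ h}`. -/
def Gl (γ : H → N) : Type _ := {p : N × H // p.1 ≤ γ p.2}

instance (γ : H → N) : PartialOrder (Gl γ) :=
  inferInstanceAs (PartialOrder {p : N × H // p.1 ≤ γ p.2})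

/-- A finite-meet preserving map is monotone. -/
def monoOfInf {γ : H → N} (hγ_inf : ∀ a b, γ (a ⊓ b) = γ a ⊓ γ b) :
    Monotone γ := by
  intro a b hab
  have h := hγ_inf a b
  rw [inf_eq_left.mpr hab] at h
  exact h.trans_le inf_le_right

/-- Componentwise binary meet on `Gl(γ)`. -/
def Gl.inf {γ : H → N} (hγ_inf : ∀ a b, γ (a ⊓ b) = γ a ⊓ γ b)
    (p q : Gl γ) : Gl γ :=
  ⟨p.1 ⊓ q.1, le_trans (inf_le_inf p.2 q.2) (le_of_eq (hγ_inf _ _).symm)⟩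

/-- The top element of `Gl(γ)`. -/
def Gl.top {γ : H → N} (hγ_top : γ ⊤ = ⊤) : Gl γ := ⟨⊤, hγ_top.ge⟩

/-- Componentwise arbitrary join on `Gl(γ)`. -/
def Gl.sSup {γ : H → N} (hγ_mono : Monotone γ) (T : Set (Gl γ)) : Gl γ :=
  ⟨SupSet.sSup (Subtype.val '' T), by
    rw [Prod.fst_sSup]
    apply sSup_le
    rintro n ⟨q, hq, rfl⟩
    obtain ⟨x, hx, rfl⟩ := hq
    refine x.2.trans (hγ_mono ?_)
    rw [Prod.snd_sSup]
    exact le_sSup ⟨x.val, Set.mem_image_of_mem _ hx, rfl⟩⟩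

/-- For `α ≤ β` pointwise, the inclusion `Gl(α) → Gl(β)`. -/
def Gl.incl {α β : H → N} (hle : ∀ h, α h ≤ β h) (p : Gl α) : Gl β :=
  ⟨p.1, p.2.trans (hle _)⟩

end

namespace Gl

variable {N H : Type*} [Order.Frame N] {α β : H → N}

theorem ext {p q : Gl α} (h : p.val = q.val) : p = q :=
  Subtype.ext h

theorem val_image_incl_image (hle : ∀ h, α h ≤ β h) (T : Set (Gl α)) :
    Subtype.val '' (incl hle '' T) = Subtype.val '' T :=
  Set.image_image _ _ _

variable [Order.Frame H]

theorem incl_inf (hα_inf : ∀ a b, α (a ⊓ b) = α a ⊓ α b)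
    (hβ_inf : ∀ a b, β (a ⊓ b) = β a ⊓ β b) (hle : ∀ h, α h ≤ β h) (p q : Gl α) :
    incl hle (Gl.inf hα_inf p q) = Gl.inf hβ_inf (incl hle p) (incl hle q) :=
  rfl

theorem incl_top (hα_top : α ⊤ = ⊤) (hβ_top : β ⊤ = ⊤) (hle : ∀ h, α h ≤ β h) :
    incl hle (Gl.top hα_top) = Gl.top hβ_top :=
  rfl

theorem incl_sSup (hα : Monotone α) (hβ : Monotone β) (hle : ∀ h, α h ≤ β h)
    (T : Set (Gl α)) :
    incl hle (Gl.sSup hα T) = Gl.sSup hβ (incl hle '' T) :=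
  ext <| congrArg SupSet.sSup (val_image_incl_image hle T).symm

end Gl

/-- If `α ≤ β` pointwise, then `Gl(α) ⊆ Gl(β)` and the inclusion
`i : Gl(α) → Gl(β)` preserves arbitrary joins and finite meets, i.e. it is a
frame homomorphism. -/
theorem glueing_inclusion_frame_hom
    {N H : Type*} [Order.Frame N] [Order.Frame H]
    (α β : H → N)
    (hα_inf : ∀ a b, α (a ⊓ b) = α a ⊓ α b) (hα_top : α ⊤ = ⊤)
    (hβ_inf : ∀ a b, β (a ⊓ b) = β a ⊓ β b) (hβ_top : β ⊤ = ⊤)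
    (hle : ∀ h, α h ≤ β h) :
    ({p : N × H | p.1 ≤ α p.2} ⊆ {p : N × H | p.1 ≤ β p.2}) ∧
      (∀ p q : Gl α,
        Gl.incl hle (Gl.inf hα_inf p q) =
          Gl.inf hβ_inf (Gl.incl hle p) (Gl.incl hle q)) ∧
      (Gl.incl hle (Gl.top hα_top) = Gl.top hβ_top) ∧
      (∀ T : Set (Gl α),
        Gl.incl hle (Gl.sSup (monoOfInf hα_inf) T) =
          Gl.sSup (monoOfInf hβ_inf) (Gl.incl hle '' T)) := by
  exact ⟨fun _ hp => le_trans hp (hle _), Gl.incl_inf hα_inf hβ_inf hle,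
          Gl.incl_top hα_top hβ_top hle, Gl.incl_sSup _ _ hle⟩
end

section
/- For α ≤ β finite-meet preserving maps H → N between frames, the inclusion i : Gl(α) → Gl(β) has right adjoint i* : Gl(β) → Gl(α) given by i*(n,h) = (n ∧ α(h), h); moreover i* preserves finite meets, satisfies i*(n,1) = (n,1) for all n ∈ N, and i*(β(h),h) = (α(h),h) for all h ∈ H (i.e., i* is a morphism of adjoint extensions). -/
section
variable {N H : Type*} [Order.Frame N] [Order.Frame H]

/-- The kernel map `n ↦ (n, ⊤)`. -/
def Gl.ker {γ : H → N} (hγ_top : γ ⊤ = ⊤) (n : N) : Gl γ :=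
  ⟨(n, ⊤), le_top.trans hγ_top.ge⟩

/-- The splitting `h ↦ (γ h, h)`. -/
def Gl.spl (γ : H → N) (h : H) : Gl γ := ⟨(γ h, h), le_rfl⟩

/-- The right adjoint of the inclusion: `(n,h) ↦ (n ⊓ α h, h)`. -/
def Gl.istar (α : H → N) {β : H → N} (p : Gl β) : Gl α :=
  ⟨(p.1.1 ⊓ α p.1.2, p.1.2), inf_le_right⟩

end

/-- For `α ≤ β`, the inclusion `i : Gl(α) → Gl(β)` has right adjoint
`i* (n,h) = (n ⊓ α h, h)`, which preserves finite meets and commutes with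
the kernels and the splittings, i.e. is a morphism of adjoint extensions. -/
theorem glueing_inclusion_right_adjoint
    {N H : Type*} [Order.Frame N] [Order.Frame H]
    (α β : H → N)
    (hα_inf : ∀ a b, α (a ⊓ b) = α a ⊓ α b) (hα_top : α ⊤ = ⊤)
    (hβ_inf : ∀ a b, β (a ⊓ b) = β a ⊓ β b) (hβ_top : β ⊤ = ⊤)
    (hle : ∀ h, α h ≤ β h) :
    -- `i ⊣ i*`
    (∀ (x : Gl α) (y : Gl β), Gl.incl hle x ≤ y ↔ x ≤ Gl.istar α y) ∧
    -- `i*` preserves finite meets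
      (∀ p q : Gl β,
        Gl.istar α (Gl.inf hβ_inf p q) =
          Gl.inf hα_inf (Gl.istar α p) (Gl.istar α q)) ∧
      (Gl.istar α (Gl.top hβ_top) = Gl.top hα_top) ∧
    -- `i*` commutes with the kernels
      (∀ n : N, Gl.istar α (Gl.ker hβ_top n) = Gl.ker hα_top n) ∧
    -- `i*` commutes with the splittings
      (∀ h : H, Gl.istar α (Gl.spl β h) = Gl.spl α h) := by
  have hmono : ∀ {a b : H}, a ≤ b → α a ≤ α b := by
    intro a b hab
    calc α a = α (a ⊓ b) := by rw [inf_eq_left.mpr hab]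
      _ ≤ α b := by rw [hα_inf]; exact inf_le_right
  refine ⟨?_, ?_, ?_, ?_, ?_⟩
  · intro x y
    constructor
    · intro hxy
      exact ⟨le_inf hxy.1 (x.2.trans (hmono hxy.2)), hxy.2⟩
    · intro hxy
      exact ⟨hxy.1.trans inf_le_left, hxy.2⟩
  · intro p q
    apply Subtype.ext
    apply Prod.ext
    · show (p.1.1 ⊓ q.1.1) ⊓ α (p.1.2 ⊓ q.1.2) = (p.1.1 ⊓ α p.1.2) ⊓ (q.1.1 ⊓ α q.1.2)
      rw [hα_inf]
      ac_rfl
    · rfl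
  · apply Subtype.ext
    apply Prod.ext
    · show (⊤ : N) ⊓ α ⊤ = ⊤
      rw [hα_top, inf_top_eq]
    · rfl
  · intro n
    apply Subtype.ext
    apply Prod.ext
    · show n ⊓ α ⊤ = n
      rw [hα_top, inf_top_eq]
    · rfl
  · intro h
    apply Subtype.ext
    apply Prod.ext
    · show β h ⊓ α h = α h
      exact inf_eq_right.mpr (hle h)
    · rfl
end

section
/- Let α, β : H → N be finite-meet preserving maps between frames and suppose f : Gl(β) → Gl(α) is a finite-meet preserving map satisfying f(n,1) = (n,1) for all n ∈ N and f(β(h),h) = (α(h),h) for all h ∈ H. Then α ≤ β pointwise and f(n,h) = (n ∧ α(h), h) for all (n,h) ∈ Gl(β). In particular, a morphism of adjoint extensions between two Artin glueings is unique if it exists, and exists iff α ≤ β. -/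
/-!
Every `(n, h) ∈ Gl(γ)` is the meet of the kernel element `(n, ⊤)` and the splitting
`(γ h, h)`, so a meet-preserving map respecting kernels and splittings is forced to be
`(n, h) ↦ (n ⊓ α h, h)`. Evaluating this at `(β h, h)` gives `α h = β h ⊓ α h`.
-/

namespace Gl

variable {N H : Type*} [Order.Frame N] [Order.Frame H] {γ : H → N}
  (hγ_inf : ∀ a b, γ (a ⊓ b) = γ a ⊓ γ b) (hγ_top : γ ⊤ = ⊤)

theorem val_inf_ker_spl (n : N) (h : H) :
    (Gl.inf hγ_inf (Gl.ker hγ_top n) (Gl.spl γ h)).1 = (n ⊓ γ h, h) := by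
  simp only [Gl.inf, Gl.ker, Gl.spl, Prod.mk_inf_mk, top_inf_eq]

theorem inf_ker_spl (p : Gl γ) :
    Gl.inf hγ_inf (Gl.ker hγ_top p.1.1) (Gl.spl γ p.1.2) = p :=
  Subtype.ext <| by rw [val_inf_ker_spl, inf_eq_left.mpr p.2]

end Gl

theorem morphism_of_adjoint_extensions_unique_general
    {N H : Type*} [Order.Frame N] [Order.Frame H]
    (α β : H → N)
    (hα_inf : ∀ a b, α (a ⊓ b) = α a ⊓ α b) (hα_top : α ⊤ = ⊤)
    (hβ_inf : ∀ a b, β (a ⊓ b) = β a ⊓ β b) (hβ_top : β ⊤ = ⊤)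
    (f : Gl β → Gl α)
    (hf_inf : ∀ p q : Gl β, f (Gl.inf hβ_inf p q) = Gl.inf hα_inf (f p) (f q))
    (hf_ker : ∀ n : N, f (Gl.ker hβ_top n) = Gl.ker hα_top n)
    (hf_spl : ∀ h : H, f (Gl.spl β h) = Gl.spl α h) :
    (∀ h : H, α h ≤ β h) ∧
      (∀ p : Gl β, f p = ⟨(p.1.1 ⊓ α p.1.2, p.1.2), inf_le_right⟩) := by
  have hf : ∀ p : Gl β, f p = ⟨(p.1.1 ⊓ α p.1.2, p.1.2), inf_le_right⟩ := fun p =>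
    Subtype.ext <| calc
      (f p).1 = (f (Gl.inf hβ_inf (Gl.ker hβ_top p.1.1) (Gl.spl β p.1.2))).1 := by
        rw [Gl.inf_ker_spl]
      _ = (Gl.inf hα_inf (Gl.ker hα_top p.1.1) (Gl.spl α p.1.2)).1 := by
        rw [hf_inf, hf_ker, hf_spl]
      _ = (p.1.1 ⊓ α p.1.2, p.1.2) := Gl.val_inf_ker_spl ..
  refine ⟨fun h => ?_, hf⟩
  have hspl : α h = β h ⊓ α h := congrArg (·.1.1) ((hf_spl h).symm.trans (hf (Gl.spl β h)))
  exact inf_eq_right.mp hspl.symm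

/-- If `f : Gl(β) → Gl(α)` is a finite-meet preserving map commuting with the
kernels `n ↦ (n,⊤)` and the splittings `h ↦ (γ h, h)` (i.e. a morphism of
adjoint extensions), then `α ≤ β` pointwise and `f (n,h) = (n ⊓ α h, h)`.
In particular a morphism of adjoint extensions between two Artin glueings is
unique if it exists, and exists iff `α ≤ β`. -/
theorem morphism_of_adjoint_extensions_unique
    {N H : Type*} [Order.Frame N] [Order.Frame H]
    (α β : H → N)
    (hα_inf : ∀ a b, α (a ⊓ b) = α a ⊓ α b) (hα_top : α ⊤ = ⊤)
    (hβ_inf : ∀ a b, β (a ⊓ b) = β a ⊓ β b) (hβ_top : β ⊤ = ⊤)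
    (f : Gl β → Gl α)
    (hf_inf : ∀ p q : Gl β, f (Gl.inf hβ_inf p q) = Gl.inf hα_inf (f p) (f q))
    (hf_top : f (Gl.top hβ_top) = Gl.top hα_top)
    (hf_ker : ∀ n : N, f (Gl.ker hβ_top n) = Gl.ker hα_top n)
    (hf_spl : ∀ h : H, f (Gl.spl β h) = Gl.spl α h) :
    (∀ h : H, α h ≤ β h) ∧
      (∀ p : Gl β, f p = ⟨(p.1.1 ⊓ α p.1.2, p.1.2), inf_le_right⟩) :=
  morphism_of_adjoint_extensions_unique_general α β hα_inf hα_top hβ_inf hβ_top f hf_inf hf_ker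
    hf_spl
end
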